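/- arXiv:1511.01999 — 3 statements merged into one kernel-verified Lean document; each statement's English description precedes it below -/
import Mathlib

section
/- Let E_1 ≤ E_2 ≤ … ≤ E_n be real numbers, p a probability vector with p_1 ≥ p_2 ≥ … ≥ p_n ≥ 0, and M an n×n doubly stochastic matrix. Then ∑_i E_i p_i ≤ ∑_{i,j} E_i M_{ij} p_j. -/
open Matrix BigOperators

/-- Auxiliary: a truncated sum over `range k` of a `Fin n`-function (extended by zero)
equals a sum over `Fin n` with an indicator. -/
lemma aux_ext_sum {n k : ℕ} (hk : k ≤ n) (g : Fin n → ℝ) :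
    ∑ i ∈ Finset.range k, (if h : i < n then g ⟨i, h⟩ else 0)
      = ∑ j : Fin n, (if (j : ℕ) < k then g j else 0) := by
  have h1 : ∑ j : Fin n, (if (j : ℕ) < k then g j else 0)
      = ∑ i ∈ Finset.range n,
          (if i < k then (if h : i < n then g ⟨i, h⟩ else 0) else 0) := by
    rw [← Fin.sum_univ_eq_sum_range
      (fun i => if i < k then (if h : i < n then g ⟨i, h⟩ else 0) else 0) n]
    exact Finset.sum_congr rfl fun j _ => by simp [j.isLt]
  rw [h1, ← Finset.sum_subset (Finset.range_subset_range.mpr hk)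
    (fun x _ hx => by
      simp only [Finset.mem_range] at hx
      simp [if_neg hx])]
  exact Finset.sum_congr rfl fun i hi => by simp [Finset.mem_range.mp hi]

/-- Lenard's lemma: with non-decreasing energies and non-increasing occupation
probabilities, a doubly stochastic matrix cannot decrease the expected energy. -/
theorem stmt2 {n : ℕ} (E p : Fin n → ℝ) (M : Matrix (Fin n) (Fin n) ℝ)
    (hE : Monotone E) (hp : Antitone p) (hp0 : ∀ i, 0 ≤ p i) (hp1 : ∑ i, p i = 1)
    (hM0 : ∀ i j, 0 ≤ M i j)
    (hrow : ∀ i, ∑ j, M i j = 1) (hcol : ∀ j, ∑ i, M i j = 1) :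
    ∑ i, E i * p i ≤ ∑ i, ∑ j, E i * M i j * p j := by
  classical
  set Mx : ℕ → Fin n → ℝ := fun i j => if h : i < n then M ⟨i, h⟩ j else 0 with hMxdef
  set eE : ℕ → ℝ := fun k => if h : k < n then E ⟨k, h⟩ else 0 with heEdef
  set P : ℕ → ℝ := fun k => if h : k < n then p ⟨k, h⟩ else 0 with hPdef
  set f : ℕ → ℝ := fun k => (∑ j, Mx k j * p j) - P k with hfdef
  have hMx0 : ∀ i j, 0 ≤ Mx i j := by
    intro i j
    simp only [hMxdef]
    split
    · exact hM0 _ _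
    · exact le_rfl
  -- partial sums of f are nonpositive
  have key : ∀ k, k ≤ n → ∑ i ∈ Finset.range k, f i ≤ 0 := by
    intro k hk
    rcases Nat.eq_zero_or_pos k with hk0 | hk0
    · simp [hk0]
    set c : Fin n → ℝ := fun j => ∑ i ∈ Finset.range k, Mx i j with hcdef
    set χ : Fin n → ℝ := fun j => if (j : ℕ) < k then 1 else 0 with hχdef
    have hsplit : ∑ i ∈ Finset.range k, f i = ∑ j : Fin n, (c j - χ j) * p j := by
      have hA : ∑ i ∈ Finset.range k, (∑ j, Mx i j * p j)
          = ∑ j : Fin n, c j * p j := by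
        rw [Finset.sum_comm]
        exact Finset.sum_congr rfl fun j _ => (Finset.sum_mul _ _ _).symm
      have hB : ∑ i ∈ Finset.range k, P i = ∑ j : Fin n, χ j * p j := by
        rw [hPdef, aux_ext_sum hk p]
        refine Finset.sum_congr rfl fun j _ => ?_
        simp only [hχdef]
        split <;> ring
      simp only [hfdef]
      rw [Finset.sum_sub_distrib, hA, hB, ← Finset.sum_sub_distrib]
      exact Finset.sum_congr rfl fun j _ => by ring
    rw [hsplit]
    -- coefficient facts
    have hc0 : ∀ j, 0 ≤ c j := fun j =>
      Finset.sum_nonneg fun i _ => hMx0 i j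
    have hc1 : ∀ j, c j ≤ 1 := by
      intro j
      calc c j ≤ ∑ i ∈ Finset.range n, Mx i j :=
            Finset.sum_le_sum_of_subset_of_nonneg (Finset.range_subset_range.mpr hk)
              (fun i _ _ => hMx0 i j)
        _ = ∑ i : Fin n, M i j := by
            rw [← Fin.sum_univ_eq_sum_range (fun i => Mx i j) n]
            exact Finset.sum_congr rfl fun i _ => by simp [hMxdef, i.isLt]
        _ = 1 := hcol j
    have hsum_c : ∑ j : Fin n, c j = (k : ℝ) := by
      simp only [hcdef]
      rw [Finset.sum_comm]
      have : ∀ i ∈ Finset.range k, ∑ j : Fin n, Mx i j = 1 := by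
        intro i hi
        have h : i < n := lt_of_lt_of_le (Finset.mem_range.mp hi) hk
        simp only [hMxdef, dif_pos h]
        exact hrow _
      rw [Finset.sum_congr rfl this]
      simp
    have hsum_χ : ∑ j : Fin n, χ j = (k : ℝ) := by
      have := aux_ext_sum hk (fun _ : Fin n => (1 : ℝ))
      rw [hχdef]
      simp only [← this]
      rw [Finset.sum_congr rfl (fun i hi =>
        dif_pos (lt_of_lt_of_le (Finset.mem_range.mp hi) hk))]
      simp
    -- threshold value
    have hk1 : k - 1 < n := by omega
    set t : ℝ := p ⟨k - 1, hk1⟩ with htdef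
    have hterm : ∀ j : Fin n, (c j - χ j) * (p j - t) ≤ 0 := by
      intro j
      by_cases hj : (j : ℕ) < k
      · have hχj : χ j = 1 := if_pos hj
        have hle : p ⟨k - 1, hk1⟩ ≤ p j := hp (by
          show (j : ℕ) ≤ k - 1
          omega)
        nlinarith [hc1 j]
      · have hχj : χ j = 0 := if_neg hj
        have hle : p j ≤ p ⟨k - 1, hk1⟩ := hp (by
          show (k : ℕ) - 1 ≤ (j : ℕ)
          omega)
        nlinarith [hc0 j]
    calc ∑ j : Fin n, (c j - χ j) * p j
        = ∑ j : Fin n, ((c j - χ j) * (p j - t) + (c j - χ j) * t) :=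
          Finset.sum_congr rfl fun j _ => by ring
      _ = (∑ j : Fin n, (c j - χ j) * (p j - t)) + (∑ j : Fin n, (c j - χ j)) * t := by
          rw [Finset.sum_add_distrib, ← Finset.sum_mul]
      _ ≤ 0 + (∑ j : Fin n, (c j - χ j)) * t := by
          gcongr ?_ + _
          exact Finset.sum_nonpos fun j _ => hterm j
      _ = 0 := by
          rw [Finset.sum_sub_distrib, hsum_c, hsum_χ]
          ring
  -- total sum of f is zero
  have hSn : ∑ i ∈ Finset.range n, f i = 0 := by
    rw [← Fin.sum_univ_eq_sum_range f n]
    have : ∀ i : Fin n, f (i : ℕ) = (∑ j, M i j * p j) - p i := by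
      intro i
      simp [hfdef, hMxdef, hPdef, i.isLt]
    rw [Finset.sum_congr rfl fun i _ => this i, Finset.sum_sub_distrib, hp1,
      Finset.sum_comm]
    have : ∀ j : Fin n, ∑ i : Fin n, M i j * p j = p j := by
      intro j
      rw [← Finset.sum_mul, hcol, one_mul]
    rw [Finset.sum_congr rfl fun j _ => this j, hp1]
    ring
  -- rewrite the goal difference
  have hgoal : (∑ i, ∑ j, E i * M i j * p j) - ∑ i, E i * p i
      = ∑ k ∈ Finset.range n, eE k * f k := by
    rw [← Fin.sum_univ_eq_sum_range (fun k => eE k * f k) n, ← Finset.sum_sub_distrib]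
    refine Finset.sum_congr rfl fun i _ => ?_
    simp only [heEdef, hfdef, hPdef, hMxdef, dif_pos i.isLt, Fin.eta]
    rw [mul_sub, Finset.mul_sum]
    simp [mul_assoc]
  -- Abel summation
  have habel := Finset.sum_range_by_parts eE f n
  simp only [smul_eq_mul] at habel
  rw [hSn, mul_zero, zero_sub] at habel
  have hterms : ∑ i ∈ Finset.range (n - 1),
      (eE (i + 1) - eE i) * (∑ j ∈ Finset.range (i + 1), f j) ≤ 0 := by
    refine Finset.sum_nonpos fun i hi => ?_
    have hi' : i < n - 1 := Finset.mem_range.mp hi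
    have h1 : i + 1 < n := by omega
    have h0 : i < n := by omega
    have hmono : eE i ≤ eE (i + 1) := by
      simp only [heEdef, dif_pos h1, dif_pos h0]
      exact hE (by simp [Fin.le_def])
    have hS : ∑ j ∈ Finset.range (i + 1), f j ≤ 0 := key (i + 1) (by omega)
    exact mul_nonpos_of_nonneg_of_nonpos (by linarith) hS
  have : 0 ≤ ∑ k ∈ Finset.range n, eE k * f k := by
    rw [habel]
    linarith
  linarith [hgoal, this]
end

section
/- Let H_S ⊗ H_A be a tensor product of finite-dimensional Hilbert spaces. Let ρ_i = ρ_can ⊗ |φ₀⟩⟨φ₀| with ρ_can = e^{−βH_S}/Z, let U be unitary, ρ_f = U ρ_i U†, and let ρ_f^{ap} = Tr_S[ρ_f] be the reduced state of the apparatus. Then Tr[(H_S ⊗ 1) ρ_f] ≥ Tr[(H_S ⊗ 1) ρ_i] − β^{−1} S(ρ_f^{ap}), where S denotes von Neumann entropy. -/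
open Matrix BigOperators Kronecker
open scoped ComplexOrder

/-- Spectral functional calculus for Hermitian matrices (junk value `0` otherwise). -/
noncomputable def matFun {n : ℕ} (f : ℝ → ℝ) (A : Matrix (Fin n) (Fin n) ℂ) :
    Matrix (Fin n) (Fin n) ℂ :=
  if hA : A.IsHermitian then
    (hA.eigenvectorUnitary : Matrix (Fin n) (Fin n) ℂ) *
      Matrix.diagonal (fun i => (f (hA.eigenvalues i) : ℂ)) *
      star (hA.eigenvectorUnitary : Matrix (Fin n) (Fin n) ℂ)
  else 0

/-- Matrix logarithm. -/
noncomputable def matLog {n : ℕ} (A : Matrix (Fin n) (Fin n) ℂ) : Matrix (Fin n) (Fin n) ℂ :=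
  matFun Real.log A

/-- Von Neumann entropy `S(ρ) = −Tr[ρ log ρ]`. -/
noncomputable def vN {n : ℕ} (ρ : Matrix (Fin n) (Fin n) ℂ) : ℝ :=
  -(Matrix.trace (ρ * matLog ρ)).re

/-- Canonical Gibbs state `e^{−βH}/Tr[e^{−βH}]`. -/
noncomputable def gibbs {n : ℕ} (β : ℝ) (H : Matrix (Fin n) (Fin n) ℂ) :
    Matrix (Fin n) (Fin n) ℂ :=
  ((matFun (fun x => Real.exp (-β * x)) H).trace)⁻¹ • matFun (fun x => Real.exp (-β * x)) H

/-- Partial trace over the system (first) factor. -/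
noncomputable def ptraceS {m d : ℕ} (ρ : Matrix (Fin m × Fin d) (Fin m × Fin d) ℂ) :
    Matrix (Fin d) (Fin d) ℂ :=
  Matrix.of fun i j => ∑ k, ρ (k, i) (k, j)

/-! ### Auxiliary material -/

set_option linter.unusedSectionVars false

section klein

lemma klein_core {A K : Type*} [Fintype A] [Fintype K]
    (p : A → ℝ) (hp : ∀ a, 0 < p a) (hp1 : ∑ a, p a = 1)
    (c : A → K → ℝ) (hc0 : ∀ a k, 0 ≤ c a k) (hcrow : ∀ a, ∑ k, c a k = 1)
    (hccol : ∀ k, ∑ a, c a k ≤ 1)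
    (q : K → ℝ) (hq0 : ∀ k, 0 ≤ q k) (hq1 : ∑ k, q k = 1)
    (hsupp : ∀ k, q k = 0 → ∀ a, c a k = 0) :
    ∑ k, (∑ a, p a * c a k) * Real.log (q k) ≤ ∑ a, p a * Real.log (p a) := by
  classical
  set r : A → ℝ := fun a => ∑ k, c a k * q k with hr
  have hr0 : ∀ a, 0 ≤ r a := fun a => Finset.sum_nonneg fun k _ => mul_nonneg (hc0 a k) (hq0 k)
  have hrpos : ∀ a, 0 < r a := by
    intro a
    rcases (hr0 a).lt_or_eq with h | h
    · exact h
    exfalso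
    have hck : ∀ k ∈ Finset.univ, c a k * q k = 0 :=
      (Finset.sum_eq_zero_iff_of_nonneg
        (fun k _ => mul_nonneg (hc0 a k) (hq0 k))).mp h.symm
    have hzero : ∑ k, c a k = 0 := Finset.sum_eq_zero fun k _ => by
      rcases (hq0 k).lt_or_eq with hq | hq
      · rcases mul_eq_zero.mp (hck k (Finset.mem_univ k)) with h1 | h1
        · exact h1
        · exact absurd h1 hq.ne'
      · exact hsupp k hq.symm a
    rw [hcrow a] at hzero
    norm_num at hzero
  have jensen : ∀ a, ∑ k, c a k * Real.log (q k) ≤ Real.log (r a) := by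
    intro a
    have h1 : ∀ k, c a k * Real.log (q k) ≤ c a k * (Real.log (r a) + q k / r a - 1) := by
      intro k
      rcases (hc0 a k).lt_or_eq with hc | hc
      · have hqk : 0 < q k := by
          rcases (hq0 k).lt_or_eq with hq | hq
          · exact hq
          · exact absurd (hsupp k hq.symm a) hc.ne'
        have hlog : Real.log (q k) - Real.log (r a) ≤ q k / r a - 1 := by
          have := Real.log_le_sub_one_of_pos (div_pos hqk (hrpos a))
          rwa [Real.log_div hqk.ne' (hrpos a).ne'] at this
        have : Real.log (q k) ≤ Real.log (r a) + q k / r a - 1 := by linarith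
        exact mul_le_mul_of_nonneg_left this (le_of_lt hc)
      · rw [← hc]; ring_nf; exact le_refl _
    calc ∑ k, c a k * Real.log (q k)
        ≤ ∑ k, c a k * (Real.log (r a) + q k / r a - 1) :=
          Finset.sum_le_sum fun k _ => h1 k
      _ = ∑ k, (c a k * Real.log (r a) + (c a k * q k) / r a - c a k) := by
          apply Finset.sum_congr rfl; intro k _; ring
      _ = (∑ k, c a k) * Real.log (r a) + (∑ k, c a k * q k) / r a - (∑ k, c a k) := by
          rw [Finset.sum_sub_distrib, Finset.sum_add_distrib, ← Finset.sum_mul, ← Finset.sum_div]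
      _ = Real.log (r a) := by
          rw [hcrow a, show (∑ k, c a k * q k) = r a from rfl,
            div_self (hrpos a).ne']; ring
  have hsumr : ∑ a, r a ≤ 1 := by
    have : ∑ a, r a = ∑ k, (∑ a, c a k) * q k := by
      rw [Finset.sum_comm (s := Finset.univ) (t := Finset.univ) (f := fun a k => c a k * q k)]
      exact Finset.sum_congr rfl fun k _ => by rw [Finset.sum_mul]
    rw [this, ← hq1]
    exact Finset.sum_le_sum fun k _ => by
      have := mul_le_mul_of_nonneg_right (hccol k) (hq0 k)
      simpa using this
  have hlogr : ∀ a, Real.log (r a) ≤ Real.log (p a) + r a / p a - 1 := by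
    intro a
    have := Real.log_le_sub_one_of_pos (div_pos (hrpos a) (hp a))
    rw [Real.log_div (hrpos a).ne' (hp a).ne'] at this
    linarith
  calc ∑ k, (∑ a, p a * c a k) * Real.log (q k)
      = ∑ k, ∑ a, p a * (c a k * Real.log (q k)) := by
        apply Finset.sum_congr rfl; intro k _
        rw [Finset.sum_mul]
        exact Finset.sum_congr rfl fun a _ => by ring
    _ = ∑ a, p a * ∑ k, c a k * Real.log (q k) := by
        rw [Finset.sum_comm]
        exact Finset.sum_congr rfl fun a _ => (Finset.mul_sum _ _ _).symm
    _ ≤ ∑ a, p a * Real.log (r a) :=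
        Finset.sum_le_sum fun a _ => mul_le_mul_of_nonneg_left (jensen a) (hp a).le
    _ ≤ ∑ a, p a * (Real.log (p a) + r a / p a - 1) :=
        Finset.sum_le_sum fun a _ => mul_le_mul_of_nonneg_left (hlogr a) (hp a).le
    _ = ∑ a, (p a * Real.log (p a) + r a - p a) := by
        apply Finset.sum_congr rfl; intro a _
        have hpa := (hp a).ne'
        field_simp
    _ = ∑ a, p a * Real.log (p a) + (∑ a, r a) - ∑ a, p a := by
        rw [Finset.sum_sub_distrib, Finset.sum_add_distrib]
    _ ≤ ∑ a, p a * Real.log (p a) := by rw [hp1]; linarith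

end klein

section aux
variable {n : ℕ} {A : Matrix (Fin n) (Fin n) ℂ}

/-- outer product -/
noncomputable def outer {N : Type*} [Fintype N] (x : N → ℂ) : Matrix N N ℂ :=
  Matrix.vecMulVec x (star x)

lemma matFun_eq (hA : A.IsHermitian) (f : ℝ → ℝ) :
    matFun f A = (hA.eigenvectorUnitary : Matrix (Fin n) (Fin n) ℂ) *
      Matrix.diagonal (fun i => (f (hA.eigenvalues i) : ℂ)) *
      star (hA.eigenvectorUnitary : Matrix (Fin n) (Fin n) ℂ) := by
  rw [matFun, dif_pos hA]

lemma trace_matFun (hA : A.IsHermitian) (f : ℝ → ℝ) :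
    (matFun f A).trace = ∑ i, (f (hA.eigenvalues i) : ℂ) := by
  rw [matFun_eq hA f, Matrix.trace_mul_cycle, Unitary.coe_star_mul_self, one_mul,
    Matrix.trace_diagonal]

lemma mul_matFun (hA : A.IsHermitian) (f : ℝ → ℝ) :
    A * matFun f A = matFun (fun x => x * f x) A := by
  have h := hA.spectral_theorem; rw [Unitary.conjStarAlgAut_apply] at h
  calc A * matFun f A
      = ((hA.eigenvectorUnitary : Matrix (Fin n) (Fin n) ℂ) *
          Matrix.diagonal (RCLike.ofReal ∘ hA.eigenvalues) *
          star (hA.eigenvectorUnitary : Matrix (Fin n) (Fin n) ℂ)) *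
        ((hA.eigenvectorUnitary : Matrix (Fin n) (Fin n) ℂ) *
          Matrix.diagonal (fun i => (f (hA.eigenvalues i) : ℂ)) *
          star (hA.eigenvectorUnitary : Matrix (Fin n) (Fin n) ℂ)) := by
        rw [← h, matFun_eq hA f]
    _ = (hA.eigenvectorUnitary : Matrix (Fin n) (Fin n) ℂ) *
          (Matrix.diagonal (RCLike.ofReal ∘ hA.eigenvalues) *
           Matrix.diagonal (fun i => (f (hA.eigenvalues i) : ℂ))) *
          star (hA.eigenvectorUnitary : Matrix (Fin n) (Fin n) ℂ) := by
        rw [mul_assoc _ _ ((hA.eigenvectorUnitary : Matrix (Fin n) (Fin n) ℂ) * _ * _)]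
        rw [show ((hA.eigenvectorUnitary : Matrix (Fin n) (Fin n) ℂ) *
              Matrix.diagonal (fun i => (f (hA.eigenvalues i) : ℂ)) *
              star (hA.eigenvectorUnitary : Matrix (Fin n) (Fin n) ℂ)) =
            (hA.eigenvectorUnitary : Matrix (Fin n) (Fin n) ℂ) *
              (Matrix.diagonal (fun i => (f (hA.eigenvalues i) : ℂ)) *
              star (hA.eigenvectorUnitary : Matrix (Fin n) (Fin n) ℂ)) from by rw [mul_assoc]]
        rw [show star (hA.eigenvectorUnitary : Matrix (Fin n) (Fin n) ℂ) *
            ((hA.eigenvectorUnitary : Matrix (Fin n) (Fin n) ℂ) *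
              (Matrix.diagonal (fun i => (f (hA.eigenvalues i) : ℂ)) *
              star (hA.eigenvectorUnitary : Matrix (Fin n) (Fin n) ℂ))) =
            Matrix.diagonal (fun i => (f (hA.eigenvalues i) : ℂ)) *
              star (hA.eigenvectorUnitary : Matrix (Fin n) (Fin n) ℂ) from by
          rw [← mul_assoc, Unitary.coe_star_mul_self, one_mul]]
        rw [← mul_assoc, ← mul_assoc, mul_assoc _ (Matrix.diagonal _)]
    _ = matFun (fun x => x * f x) A := by
        rw [matFun_eq hA (fun x => x * f x), Matrix.diagonal_mul_diagonal]
        congr 2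
        ext i
        simp [Function.comp, Complex.ofReal_mul]

lemma matFun_sum (hA : A.IsHermitian) (f : ℝ → ℝ) :
    matFun f A = ∑ a, (f (hA.eigenvalues a) : ℂ) •
      outer (fun i => (hA.eigenvectorUnitary : Matrix (Fin n) (Fin n) ℂ) i a) := by
  rw [matFun_eq hA f]
  ext i j
  simp only [Matrix.mul_apply, Matrix.mul_diagonal, Matrix.sum_apply, Matrix.smul_apply, outer,
    Matrix.vecMulVec_apply, Matrix.star_apply, smul_eq_mul, Pi.star_apply, Function.comp]
  apply Finset.sum_congr rfl; intro a _
  rw [← Matrix.mul_apply, Matrix.mul_diagonal]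
  simp [Function.comp]
  ring

end aux

section outerLemmas
variable {N M K : Type*} [Fintype N] [Fintype M] [Fintype K]

lemma outer_conjTranspose (x : N → ℂ) : (outer x)ᴴ = outer x := by
  ext i j
  simp [outer, Matrix.vecMulVec_apply, mul_comm]

lemma trace_mul_outer (A : Matrix N N ℂ) (x : N → ℂ) :
    (A * outer x).trace = star x ⬝ᵥ (A *ᵥ x) := by
  simp only [Matrix.trace, Matrix.diag, Matrix.mul_apply, outer, Matrix.vecMulVec_apply,
    dotProduct, Matrix.mulVec, Pi.star_apply]
  apply Finset.sum_congr rfl; intro i _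
  rw [Finset.mul_sum]
  apply Finset.sum_congr rfl; intro j _
  ring

lemma outer_mulVec (x y : N → ℂ) : outer x *ᵥ y = (star x ⬝ᵥ y) • x := by
  ext i
  simp only [outer, Matrix.mulVec, Matrix.vecMulVec_apply, dotProduct, Pi.smul_apply,
    Pi.star_apply, smul_eq_mul, Finset.sum_mul, Finset.mul_sum]
  apply Finset.sum_congr rfl; intro j _
  ring

lemma conj_outer (U : Matrix N N ℂ) (x : N → ℂ) : U * outer x * Uᴴ = outer (U *ᵥ x) := by
  ext i j
  simp only [Matrix.mul_apply, outer, Matrix.vecMulVec_apply, Matrix.conjTranspose_apply,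
    Matrix.mulVec, dotProduct, Pi.star_apply, star_sum, star_mul']
  rw [Finset.sum_mul_sum, Finset.sum_comm]
  simp only [Finset.sum_mul]
  apply Finset.sum_congr rfl; intro a _
  apply Finset.sum_congr rfl; intro b _
  ring

/-- Kronecker product of vectors. -/
def vkron (x : N → ℂ) (y : M → ℂ) : N × M → ℂ := fun p => x p.1 * y p.2

lemma outer_kron (x : N → ℂ) (y : M → ℂ) : outer x ⊗ₖ outer y = outer (vkron x y) := by
  ext p q
  simp [outer, Matrix.kroneckerMap_apply, Matrix.vecMulVec_apply, vkron]
  ring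

lemma dot_vkron (x x' : N → ℂ) (y y' : M → ℂ) :
    star (vkron x y) ⬝ᵥ vkron x' y' = (star x ⬝ᵥ x') * (star y ⬝ᵥ y') := by
  simp only [dotProduct, vkron, Pi.star_apply, Finset.sum_mul_sum, star_mul',
    Fintype.sum_prod_type]
  apply Finset.sum_congr rfl; intro a _
  apply Finset.sum_congr rfl; intro b _
  ring

lemma kron_mulVec (A : Matrix N N ℂ) (B : Matrix M M ℂ) (x : N → ℂ) (y : M → ℂ) :
    (A ⊗ₖ B) *ᵥ vkron x y = vkron (A *ᵥ x) (B *ᵥ y) := by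
  ext p
  simp only [Matrix.mulVec, dotProduct, vkron, Matrix.kroneckerMap_apply,
    Fintype.sum_prod_type, Finset.sum_mul_sum]
  apply Finset.sum_congr rfl; intro a _
  apply Finset.sum_congr rfl; intro b _
  ring

lemma sum_outer_cols (A : Matrix N K ℂ) : ∑ a : K, outer (fun i => A i a) = A * Aᴴ := by
  ext i j
  simp only [Matrix.sum_apply, outer, Matrix.vecMulVec_apply, Matrix.mul_apply,
    Matrix.conjTranspose_apply, Pi.star_apply]

lemma sum_smul_kron (c : K → ℂ) (Aa : K → Matrix N N ℂ) (B : Matrix M M ℂ) :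
    (∑ a, c a • Aa a) ⊗ₖ B = ∑ a, c a • (Aa a ⊗ₖ B) := by
  ext p q
  simp only [Matrix.kroneckerMap_apply, Matrix.sum_apply, Matrix.smul_apply, smul_eq_mul,
    Finset.sum_mul]
  exact Finset.sum_congr rfl fun a _ => by ring

lemma sum_kron (Aa : K → Matrix N N ℂ) (B : Matrix M M ℂ) :
    (∑ a, Aa a) ⊗ₖ B = ∑ a, (Aa a ⊗ₖ B) := by
  ext p q
  simp only [Matrix.kroneckerMap_apply, Matrix.sum_apply, Finset.sum_mul]

lemma kron_sum (A : Matrix N N ℂ) (Bb : K → Matrix M M ℂ) :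
    A ⊗ₖ (∑ b, Bb b) = ∑ b, (A ⊗ₖ Bb b) := by
  ext p q
  simp only [Matrix.kroneckerMap_apply, Matrix.sum_apply, Finset.mul_sum]

lemma star_dot (x ψ : N → ℂ) : star (star x ⬝ᵥ ψ) = star ψ ⬝ᵥ x := by
  simp only [dotProduct, star_sum, star_mul', Pi.star_apply, star_star]
  exact Finset.sum_congr rfl fun i _ => by ring

lemma trace_outer_mul_outer (ψ x : N → ℂ) :
    (outer ψ * outer x).trace = ((Complex.normSq (star x ⬝ᵥ ψ) : ℝ) : ℂ) := by
  rw [trace_mul_outer, outer_mulVec, dotProduct_smul, smul_eq_mul,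
    ← star_dot x ψ, mul_comm, Complex.star_def, Complex.mul_conj]

lemma dot_outer_sum (xs : K → N → ℂ) (ψ₁ ψ₂ : N → ℂ) :
    ∑ k, (star ψ₂ ⬝ᵥ xs k) * (star (xs k) ⬝ᵥ ψ₁) =
      star ψ₂ ⬝ᵥ ((∑ k, outer (xs k)) *ᵥ ψ₁) := by
  simp only [dotProduct, Matrix.mulVec, Matrix.sum_apply, outer, Matrix.vecMulVec_apply,
    Pi.star_apply, Finset.sum_mul, Finset.mul_sum]
  conv_rhs => rw [Finset.sum_comm]
  rw [Finset.sum_comm]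
  apply Finset.sum_congr rfl; intro i _
  rw [Finset.sum_comm]
  apply Finset.sum_congr rfl; intro j _
  apply Finset.sum_congr rfl; intro k _
  ring

lemma vkron_smul_left (c : ℂ) (x : N → ℂ) (y : M → ℂ) :
    vkron (c • x) y = c • vkron x y := by
  ext p; simp [vkron]; ring

lemma trace_mul_one_kron {m d : ℕ} (ρ : Matrix (Fin m × Fin d) (Fin m × Fin d) ℂ)
    (B : Matrix (Fin d) (Fin d) ℂ) :
    (ρ * ((1 : Matrix (Fin m) (Fin m) ℂ) ⊗ₖ B)).trace = (ptraceS ρ * B).trace := by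
  simp only [Matrix.trace, Matrix.diag, Matrix.mul_apply, Matrix.kroneckerMap_apply,
    Fintype.sum_prod_type, Matrix.one_apply, ptraceS, Matrix.of_apply, mul_ite, mul_zero,
    ite_mul, zero_mul, Finset.sum_ite_irrel, Finset.sum_ite_eq, Finset.sum_ite_eq',
    Finset.mem_univ, if_true, Finset.sum_mul, one_mul]
  rw [Finset.sum_comm]
  apply Finset.sum_congr rfl; intro i _
  simp only [Finset.sum_const_zero, Finset.sum_ite_eq', Finset.mem_univ, if_true]
  rw [Finset.sum_comm]

lemma outer_mul_herm (A : Matrix N N ℂ) (x : N → ℂ) (c : ℂ) (h : A *ᵥ x = c • x)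
    (hA : Aᴴ = A) (hc : star c = c) : outer x * A = c • outer x := by
  have hrow : star x ᵥ* A = c • star x := by
    have := congrArg star h
    rw [Matrix.star_mulVec, hA] at this
    rw [this]
    ext i
    simp [star_smul, hc]
  ext i j
  simp only [Matrix.mul_apply, outer, Matrix.vecMulVec_apply, Matrix.smul_apply, smul_eq_mul]
  have : ∑ l, x i * star x l * A l j = x i * (star x ᵥ* A) j := by
    simp only [Matrix.vecMul, dotProduct, Pi.star_apply, Finset.mul_sum]
    exact Finset.sum_congr rfl fun l _ => by ring
  rw [this, hrow]
  simp [Pi.smul_apply]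
  ring

end outerLemmas

/-- Refined Theorem 1: `Tr[(H_S ⊗ 1) ρ_f] ≥ Tr[(H_S ⊗ 1) ρ_i] − β⁻¹ S(ρ_f^{ap})`. -/
theorem stmt6 {m d : ℕ}
    (HS : Matrix (Fin m) (Fin m) ℂ) (hHS : HS.IsHermitian)
    (β : ℝ) (hβ : 0 < β)
    (φ : Fin d → ℂ) (hφ : ∑ i, ‖φ i‖ ^ 2 = 1)
    (U : Matrix (Fin m × Fin d) (Fin m × Fin d) ℂ)
    (hU : U ∈ Matrix.unitaryGroup (Fin m × Fin d) ℂ) :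
    (Matrix.trace ((HS ⊗ₖ (1 : Matrix (Fin d) (Fin d) ℂ)) *
        (U * ((gibbs β HS) ⊗ₖ Matrix.vecMulVec φ (star φ)) * Uᴴ))).re ≥
      (Matrix.trace ((HS ⊗ₖ (1 : Matrix (Fin d) (Fin d) ℂ)) *
        ((gibbs β HS) ⊗ₖ Matrix.vecMulVec φ (star φ)))).re -
        β⁻¹ * vN (ptraceS (U * ((gibbs β HS) ⊗ₖ Matrix.vecMulVec φ (star φ)) * Uᴴ)) := by
  classical
  rcases Nat.eq_zero_or_pos m with hm | hm
  · subst hm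
    have hpt : ptraceS (U * ((gibbs β HS) ⊗ₖ Matrix.vecMulVec φ (star φ)) * Uᴴ) = 0 := by
      ext i j; simp [ptraceS]
    rw [hpt]
    have hv0 : vN (0 : Matrix (Fin d) (Fin d) ℂ) = 0 := by simp [vN]
    rw [hv0]
    simp [Matrix.trace]
  -- main case : m > 0
  set H' : Matrix (Fin m × Fin d) (Fin m × Fin d) ℂ := HS ⊗ₖ (1 : Matrix (Fin d) (Fin d) ℂ)
    with hH'def
  set ρi : Matrix (Fin m × Fin d) (Fin m × Fin d) ℂ :=
    (gibbs β HS) ⊗ₖ Matrix.vecMulVec φ (star φ) with hρidef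
  set ρf : Matrix (Fin m × Fin d) (Fin m × Fin d) ℂ := U * ρi * Uᴴ with hρfdef
  set σap : Matrix (Fin d) (Fin d) ℂ := ptraceS ρf with hσdef
  set V : Matrix (Fin m) (Fin m) ℂ := (hHS.eigenvectorUnitary : Matrix (Fin m) (Fin m) ℂ)
    with hVdef
  set E : Fin m → ℝ := hHS.eigenvalues with hEdef
  set Z : ℝ := ∑ a, Real.exp (-β * E a) with hZdef
  have hZpos : 0 < Z := Finset.sum_pos (fun a _ => Real.exp_pos _)
    ⟨⟨0, hm⟩, Finset.mem_univ _⟩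
  set p : Fin m → ℝ := fun a => Real.exp (-β * E a) / Z with hpdef
  have hppos : ∀ a, 0 < p a := fun a => div_pos (Real.exp_pos _) hZpos
  have hpsum : ∑ a, p a = 1 := by
    rw [show (∑ a, p a) = (∑ a, Real.exp (-β * E a)) / Z from by
      rw [Finset.sum_div]]
    exact div_self hZpos.ne'
  set v : Fin m → Fin m → ℂ := fun a i => V i a with hvdef
  have hVl : star V * V = 1 := Unitary.coe_star_mul_self hHS.eigenvectorUnitary
  have hVr : V * star V = 1 := Unitary.coe_mul_star_self hHS.eigenvectorUnitary
  have hv : ∀ a b, star (v a) ⬝ᵥ v b = if a = b then 1 else 0 := by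
    intro a b
    have h1 : star (v a) ⬝ᵥ v b = (star V * V) a b := by
      simp [Matrix.mul_apply, Matrix.star_apply, dotProduct, hvdef]
    rw [h1, hVl, Matrix.one_apply]
  have hφ1 : star φ ⬝ᵥ φ = 1 := by
    have h1 : star φ ⬝ᵥ φ = ((∑ i, ‖φ i‖ ^ 2 : ℝ) : ℂ) := by
      rw [Complex.ofReal_sum]
      apply Finset.sum_congr rfl; intro i _
      rw [Pi.star_apply, Complex.star_def, mul_comm, Complex.mul_conj, Complex.normSq_eq_norm_sq]
    rw [h1, hφ]; norm_num
  have hHSv : ∀ a, HS *ᵥ v a = (E a : ℂ) • v a := by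
    intro a
    have h1 : v a = ⇑(hHS.eigenvectorBasis a) := by
      funext i; exact hHS.eigenvectorUnitary_apply i a
    rw [h1, hHS.mulVec_eigenvectorBasis]
    ext i; simp [Complex.real_smul, hEdef]
  have hgibbs : gibbs β HS = ∑ a, (p a : ℂ) • outer (v a) := by
    rw [gibbs, trace_matFun hHS (fun x => Real.exp (-β * x)),
      matFun_sum hHS (fun x => Real.exp (-β * x)), Finset.smul_sum]
    apply Finset.sum_congr rfl; intro a _
    rw [smul_smul]
    congr 1
    rw [show (∑ i, ((Real.exp (-β * hHS.eigenvalues i) : ℝ) : ℂ)) = ((Z : ℝ) : ℂ) from by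
      rw [hZdef]; push_cast; rfl]
    rw [hpdef]
    push_cast
    rw [div_eq_inv_mul]
  set u : Fin m → (Fin m × Fin d → ℂ) := fun a => vkron (v a) φ with hudef
  set ψ : Fin m → (Fin m × Fin d → ℂ) := fun a => U *ᵥ u a with hψdef
  have hρisum : ρi = ∑ a, (p a : ℂ) • outer (u a) := by
    rw [hρidef, hgibbs, show Matrix.vecMulVec φ (star φ) = outer φ from rfl, sum_smul_kron]
    apply Finset.sum_congr rfl; intro a _
    rw [outer_kron]
  have hρfsum : ρf = ∑ a, (p a : ℂ) • outer (ψ a) := by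
    rw [hρfdef, hρisum, Finset.mul_sum, Finset.sum_mul]
    apply Finset.sum_congr rfl; intro a _
    rw [Matrix.mul_smul, Matrix.smul_mul, conj_outer]
  have hUc : Uᴴ * U = 1 := by
    rw [← Matrix.star_eq_conjTranspose]
    exact (Matrix.mem_unitaryGroup_iff').mp hU
  have hψd : ∀ a b, star (ψ a) ⬝ᵥ ψ b = if a = b then 1 else 0 := by
    intro a b
    rw [hψdef]
    show star (U *ᵥ u a) ⬝ᵥ (U *ᵥ u b) = _
    rw [Matrix.star_mulVec, dotProduct_mulVec, Matrix.vecMul_vecMul, hUc,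
      Matrix.vecMul_one, hudef]
    show star (vkron (v a) φ) ⬝ᵥ vkron (v b) φ = _
    rw [dot_vkron, hv, hφ1, mul_one]
  have hρfH : ρfᴴ = ρf := by
    rw [hρfsum, Matrix.conjTranspose_sum]
    apply Finset.sum_congr rfl; intro a _
    rw [Matrix.conjTranspose_smul, outer_conjTranspose]
    congr 1
    simp [Complex.star_def, Complex.conj_ofReal]
  have hσH : σap.IsHermitian := by
    show σapᴴ = σap
    ext i j
    rw [Matrix.conjTranspose_apply, hσdef]
    show star (ptraceS ρf j i) = ptraceS ρf i j
    rw [ptraceS, Matrix.of_apply, Matrix.of_apply, star_sum]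
    apply Finset.sum_congr rfl; intro k _
    have := congrFun (congrFun hρfH (k, i)) (k, j)
    rw [Matrix.conjTranspose_apply] at this
    exact this
  set W : Matrix (Fin d) (Fin d) ℂ := (hσH.eigenvectorUnitary : Matrix (Fin d) (Fin d) ℂ)
    with hWdef
  set μ : Fin d → ℝ := hσH.eigenvalues with hμdef
  set w : Fin d → Fin d → ℂ := fun j i => W i j with hwdef
  have hWl : star W * W = 1 := Unitary.coe_star_mul_self hσH.eigenvectorUnitary
  have hWr : W * star W = 1 := Unitary.coe_mul_star_self hσH.eigenvectorUnitary
  have hw : ∀ a b, star (w a) ⬝ᵥ w b = if a = b then 1 else 0 := by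
    intro a b
    have h1 : star (w a) ⬝ᵥ w b = (star W * W) a b := by
      simp [Matrix.mul_apply, Matrix.star_apply, dotProduct, hwdef]
    rw [h1, hWl, Matrix.one_apply]
  have hweig : ∀ j, σap *ᵥ w j = (μ j : ℂ) • w j := by
    intro j
    have h1 : w j = ⇑(hσH.eigenvectorBasis j) := by
      funext i; exact hσH.eigenvectorUnitary_apply i j
    rw [h1, hσH.mulVec_eigenvectorBasis]
    ext i; simp [Complex.real_smul, hμdef]
  set xv : Fin m × Fin d → (Fin m × Fin d → ℂ) := fun k => vkron (v k.1) (w k.2) with hxvdef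
  have hVVH : ∑ b, outer (v b) = 1 := by
    have := sum_outer_cols V
    rw [← Matrix.star_eq_conjTranspose] at this
    rw [show (fun b => outer (v b)) = fun b => outer (fun i => V i b) from rfl, this, hVr]
  have hWWH : ∑ j, outer (w j) = 1 := by
    have := sum_outer_cols W
    rw [← Matrix.star_eq_conjTranspose] at this
    rw [show (fun j => outer (w j)) = fun j => outer (fun i => W i j) from rfl, this, hWr]
  have hxv1 : ∑ k, outer (xv k) = 1 := by
    rw [show (∑ k, outer (xv k)) = ∑ b, ∑ j, outer (v b) ⊗ₖ outer (w j) from by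
      rw [Fintype.sum_prod_type]
      exact Finset.sum_congr rfl fun b _ => Finset.sum_congr rfl fun j _ => (outer_kron _ _).symm]
    rw [show (∑ b, ∑ j, outer (v b) ⊗ₖ outer (w j)) = ∑ b, outer (v b) ⊗ₖ (∑ j, outer (w j))
        from Finset.sum_congr rfl fun b _ => (kron_sum _ _).symm,
      ← sum_kron, hVVH, hWWH, Matrix.one_kronecker_one]
  set c : Fin m → Fin m × Fin d → ℝ := fun a k => Complex.normSq (star (xv k) ⬝ᵥ ψ a) with hcdef
  set t : Fin m × Fin d → ℝ := fun k => ∑ a, p a * c a k with htdef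
  have hc0 : ∀ a k, 0 ≤ c a k := fun a k => Complex.normSq_nonneg _
  have ht0 : ∀ k, 0 ≤ t k :=
    fun k => Finset.sum_nonneg fun a _ => mul_nonneg (hppos a).le (hc0 a k)
  have hT : ∀ k, (ρf * outer (xv k)).trace = ((t k : ℝ) : ℂ) := by
    intro k
    rw [hρfsum, Finset.sum_mul, Matrix.trace_sum, htdef]
    push_cast
    apply Finset.sum_congr rfl; intro a _
    rw [Matrix.smul_mul, Matrix.trace_smul, trace_outer_mul_outer]
    rw [hcdef]
    simp [smul_eq_mul]
  have hnormSqC : ∀ (a : Fin m) (k : Fin m × Fin d),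
      ((c a k : ℝ) : ℂ) = (star (ψ a) ⬝ᵥ xv k) * (star (xv k) ⬝ᵥ ψ a) := by
    intro a k
    rw [hcdef, ← star_dot (xv k) (ψ a), Complex.star_def, mul_comm, Complex.mul_conj]
  have hrow : ∀ a, ∑ k, c a k = 1 := by
    intro a
    have h2 : ∑ k, ((c a k : ℝ) : ℂ) = 1 := by
      rw [Finset.sum_congr rfl fun k _ => hnormSqC a k, dot_outer_sum, hxv1,
        Matrix.one_mulVec, hψd a a]
      simp
    have h3 : ((∑ k, c a k : ℝ) : ℂ) = ((1 : ℝ) : ℂ) := by push_cast; push_cast at h2; exact h2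
    exact_mod_cast h3
  have hcol : ∀ k, ∑ a, c a k ≤ 1 := by
    intro k
    set G : Matrix (Fin m) (Fin m × Fin d) ℂ := Matrix.of fun a l => star (xv l) ⬝ᵥ ψ a
      with hGdef
    have hGG : G * Gᴴ = 1 := by
      ext a b
      rw [Matrix.mul_apply]
      rw [show (∑ l, G a l * Gᴴ l b) = ∑ l, (star (ψ b) ⬝ᵥ xv l) * (star (xv l) ⬝ᵥ ψ a) from by
        apply Finset.sum_congr rfl; intro l _
        rw [Matrix.conjTranspose_apply, hGdef]
        show (star (xv l) ⬝ᵥ ψ a) * star (star (xv l) ⬝ᵥ ψ b) = _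
        rw [star_dot]; ring]
      rw [dot_outer_sum, hxv1, Matrix.one_mulVec, hψd b a, Matrix.one_apply]
      by_cases hab : a = b <;> simp [hab]
      exact fun h => absurd h.symm hab
    set P : Matrix (Fin m × Fin d) (Fin m × Fin d) ℂ := Gᴴ * G with hPdef
    have hPP : P * P = P := by
      show Gᴴ * G * (Gᴴ * G) = Gᴴ * G
      rw [Matrix.mul_assoc Gᴴ G (Gᴴ * G), ← Matrix.mul_assoc G Gᴴ G, hGG, Matrix.one_mul]
    have hPH : Pᴴ = P := by
      show (Gᴴ * G)ᴴ = Gᴴ * G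
      rw [Matrix.conjTranspose_mul, Matrix.conjTranspose_conjTranspose]
    have hPkk : P k k = ((∑ a, c a k : ℝ) : ℂ) := by
      rw [hPdef, Matrix.mul_apply]
      push_cast
      apply Finset.sum_congr rfl; intro a _
      rw [Matrix.conjTranspose_apply, hGdef, hcdef]
      show star (star (xv k) ⬝ᵥ ψ a) * (star (xv k) ⬝ᵥ ψ a) =
        ((Complex.normSq (star (xv k) ⬝ᵥ ψ a) : ℝ) : ℂ)
      rw [Complex.star_def, mul_comm, Complex.mul_conj]
    have hs2 : ((∑ a, c a k : ℝ) : ℂ) = ∑ l, ((Complex.normSq (P k l) : ℝ) : ℂ) := by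
      rw [← hPkk]
      conv_lhs => rw [← hPP]
      rw [Matrix.mul_apply]
      apply Finset.sum_congr rfl; intro l _
      rw [show P l k = star (P k l) from by
        conv_lhs => rw [← hPH]
        rw [Matrix.conjTranspose_apply]]
      rw [Complex.star_def, Complex.mul_conj]
    have hs3 : (∑ a, c a k) = ∑ l, Complex.normSq (P k l) := by
      have := hs2; push_cast at this; exact_mod_cast this
    have hge : Complex.normSq (P k k) ≤ ∑ l, Complex.normSq (P k l) :=
      Finset.single_le_sum (f := fun l => Complex.normSq (P k l))
        (fun l _ => Complex.normSq_nonneg _) (Finset.mem_univ k)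
    rw [hPkk, Complex.normSq_ofReal] at hge
    nlinarith [Finset.sum_nonneg (fun a (_ : a ∈ Finset.univ) => hc0 a k), hs3]
  have hμt : ∀ j, ∑ b, t (b, j) = μ j := by
    intro j
    have hcx : ∑ b, ((t (b, j) : ℝ) : ℂ) = ((μ j : ℝ) : ℂ) := by
      calc ∑ b, ((t (b, j) : ℝ) : ℂ)
          = ∑ b, (ρf * outer (xv (b, j))).trace :=
            Finset.sum_congr rfl fun b _ => (hT (b, j)).symm
        _ = (ρf * ∑ b, outer (xv (b, j))).trace := by
            rw [Finset.mul_sum, Matrix.trace_sum]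
        _ = (ρf * ((1 : Matrix (Fin m) (Fin m) ℂ) ⊗ₖ outer (w j))).trace := by
            rw [show (∑ b, outer (xv (b, j))) = (1 : Matrix (Fin m) (Fin m) ℂ) ⊗ₖ outer (w j)
              from by
                rw [show (fun b => outer (xv (b, j))) = fun b => outer (v b) ⊗ₖ outer (w j)
                  from funext fun b => (outer_kron _ _).symm, ← sum_kron, hVVH]]
        _ = (ptraceS ρf * outer (w j)).trace := trace_mul_one_kron ρf (outer (w j))
        _ = star (w j) ⬝ᵥ (σap *ᵥ w j) := by rw [← hσdef, trace_mul_outer]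
        _ = ((μ j : ℝ) : ℂ) := by
            rw [hweig j, dotProduct_smul, hw j j]
            simp
    have h3 : ((∑ b, t (b, j) : ℝ) : ℂ) = ((μ j : ℝ) : ℂ) := by push_cast; push_cast at hcx; exact hcx
    exact_mod_cast h3
  have hμ0 : ∀ j, 0 ≤ μ j := by
    intro j
    rw [← hμt j]
    exact Finset.sum_nonneg fun b _ => ht0 (b, j)
  have htsum : ∑ k, t k = 1 := by
    rw [show (∑ k, t k) = ∑ a, p a * (∑ k, c a k) from by
      rw [htdef]  -- t k = ∑ a, p a * c a k
      rw [Finset.sum_comm]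
      exact Finset.sum_congr rfl fun a _ => (Finset.mul_sum _ _ _).symm]
    rw [Finset.sum_congr rfl fun a (_ : a ∈ Finset.univ) => by rw [hrow a, mul_one]]
    exact hpsum
  have hμsum : ∑ j, μ j = 1 := by
    rw [show (∑ j, μ j) = ∑ j, ∑ b, t (b, j) from
      Finset.sum_congr rfl fun j _ => (hμt j).symm]
    rw [← htsum, Fintype.sum_prod_type, Finset.sum_comm]
  have hH'H : H'ᴴ = H' := by
    rw [hH'def]
    ext pp qq
    rw [Matrix.conjTranspose_apply, Matrix.kroneckerMap_apply, Matrix.kroneckerMap_apply,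
      star_mul']
    rw [show star (HS qq.1 pp.1) = HS pp.1 qq.1 from by
      have := congrFun (congrFun hHS pp.1) qq.1
      rw [Matrix.conjTranspose_apply] at this
      exact this]
    rw [show star ((1 : Matrix (Fin d) (Fin d) ℂ) qq.2 pp.2) =
        (1 : Matrix (Fin d) (Fin d) ℂ) pp.2 qq.2 from by
      rw [Matrix.one_apply, Matrix.one_apply]
      by_cases h : qq.2 = pp.2
      · simp [h]
      · rw [if_neg h, star_zero, if_neg (fun hh => h hh.symm)]]
  have hH'x : ∀ k, H' *ᵥ xv k = (E k.1 : ℂ) • xv k := by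
    intro k
    rw [hH'def, hxvdef]
    show (HS ⊗ₖ 1) *ᵥ vkron (v k.1) (w k.2) = _
    rw [kron_mulVec, hHSv k.1, Matrix.one_mulVec, vkron_smul_left]
  have hFtr : (H' * ρf).trace = ((∑ k, E k.1 * t k : ℝ) : ℂ) := by
    calc (H' * ρf).trace = (H' * ρf * ∑ k, outer (xv k)).trace := by rw [hxv1, mul_one]
      _ = ∑ k, (H' * ρf * outer (xv k)).trace := by rw [Finset.mul_sum, Matrix.trace_sum]
      _ = ∑ k, ((E k.1 : ℂ) * (ρf * outer (xv k)).trace) := by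
          apply Finset.sum_congr rfl; intro k _
          rw [Matrix.trace_mul_cycle, outer_mul_herm H' (xv k) ((E k.1 : ℝ) : ℂ) (hH'x k) hH'H
            (by rw [Complex.star_def, Complex.conj_ofReal]), Matrix.smul_mul, Matrix.trace_smul,
            Matrix.trace_mul_comm]
          simp
      _ = ((∑ k, E k.1 * t k : ℝ) : ℂ) := by
          have h9 : ∀ k : Fin m × Fin d,
              (E k.1 : ℂ) * (ρf * outer (xv k)).trace = ((E k.1 * t k : ℝ) : ℂ) := by
            intro k; rw [hT k]; push_cast; ring
          rw [Finset.sum_congr rfl fun k _ => h9 k, ← Complex.ofReal_sum]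
  have hIEtr : (H' * ρi).trace = ((∑ a, p a * E a : ℝ) : ℂ) := by
    rw [hρisum, Finset.mul_sum, Matrix.trace_sum]
    push_cast
    apply Finset.sum_congr rfl; intro a _
    rw [Matrix.mul_smul, Matrix.trace_smul, trace_mul_outer]
    rw [show H' *ᵥ u a = (E a : ℂ) • u a from by
      rw [hH'def, hudef]
      show (HS ⊗ₖ 1) *ᵥ vkron (v a) φ = _
      rw [kron_mulVec, hHSv a, Matrix.one_mulVec, vkron_smul_left]]
    rw [dotProduct_smul, hudef]
    show (p a : ℂ) • ((E a : ℂ) • (star (vkron (v a) φ) ⬝ᵥ vkron (v a) φ)) = _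
    rw [dot_vkron, hv, hφ1]
    simp only [if_pos rfl, mul_one, smul_eq_mul]
    push_cast
    ring
  have hvNeq : vN σap = -∑ j, μ j * Real.log (μ j) := by
    rw [vN, show matLog σap = matFun Real.log σap from rfl, mul_matFun hσH Real.log,
      trace_matFun hσH (fun x => x * Real.log x)]
    rw [show (∑ i, ((hσH.eigenvalues i * Real.log (hσH.eigenvalues i) : ℝ) : ℂ))
        = ((∑ j, μ j * Real.log (μ j) : ℝ) : ℂ) from by push_cast; rfl]
    rw [Complex.ofReal_re]
  set q : Fin m × Fin d → ℝ := fun k => p k.1 * μ k.2 with hqdef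
  have hq0 : ∀ k, 0 ≤ q k := fun k => mul_nonneg (hppos k.1).le (hμ0 k.2)
  have hq1 : ∑ k, q k = 1 := by
    rw [hqdef, Fintype.sum_prod_type]
    rw [Finset.sum_congr rfl fun b (_ : b ∈ Finset.univ) => (Finset.mul_sum _ _ _).symm]
    rw [Finset.sum_congr rfl fun b (_ : b ∈ Finset.univ) => by rw [hμsum, mul_one]]
    exact hpsum
  have htzero : ∀ k, μ k.2 = 0 → t k = 0 := by
    intro k hk
    have hsum0 : ∑ b, t (b, k.2) = 0 := by rw [hμt, hk]
    have := (Finset.sum_eq_zero_iff_of_nonneg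
      (fun b (_ : b ∈ Finset.univ) => ht0 (b, k.2))).mp hsum0 k.1 (Finset.mem_univ _)
    simpa using this
  have hsupp : ∀ k, q k = 0 → ∀ a, c a k = 0 := by
    intro k hk a
    have hμk : μ k.2 = 0 := by
      rcases mul_eq_zero.mp hk with h1 | h1
      · exact absurd h1 (hppos k.1).ne'
      · exact h1
    have htk : t k = 0 := htzero k hμk
    have := (Finset.sum_eq_zero_iff_of_nonneg
      (fun a (_ : a ∈ Finset.univ) => mul_nonneg (hppos a).le (hc0 a k))).mp htk a
      (Finset.mem_univ _)
    rcases mul_eq_zero.mp this with h1 | h1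
    · exact absurd h1 (hppos a).ne'
    · exact h1
  have key := klein_core p hppos hpsum c hc0 hrow hcol q hq0 hq1 hsupp
  have hlogp : ∀ a, Real.log (p a) = -β * E a - Real.log Z := by
    intro a
    rw [show p a = Real.exp (-β * E a) / Z from rfl,
      Real.log_div (Real.exp_ne_zero _) hZpos.ne', Real.log_exp]
  set F : ℝ := ∑ k, E k.1 * t k with hFdef
  set IE : ℝ := ∑ a, p a * E a with hIEdef
  set M : ℝ := ∑ j, μ j * Real.log (μ j) with hMdef
  have hL : ∑ k, (∑ a, p a * c a k) * Real.log (q k) = -β * F - Real.log Z + M := by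
    have h1 : ∀ k, (∑ a, p a * c a k) * Real.log (q k)
        = t k * Real.log (p k.1) + t k * Real.log (μ k.2) := by
      intro k
      rcases eq_or_lt_of_le (hμ0 k.2) with hμk | hμk
      · have htk : t k = 0 := htzero k hμk.symm
        rw [show (∑ a, p a * c a k) = t k from rfl, htk]; ring
      · rw [show (∑ a, p a * c a k) = t k from rfl,
          show q k = p k.1 * μ k.2 from rfl,
          Real.log_mul (hppos k.1).ne' hμk.ne']
        ring
    rw [Finset.sum_congr rfl fun k _ => h1 k, Finset.sum_add_distrib]
    have h2 : ∑ k : Fin m × Fin d, t k * Real.log (p k.1) = -β * F - Real.log Z := by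
      rw [Fintype.sum_prod_type]
      rw [Finset.sum_congr rfl fun b (_ : b ∈ Finset.univ) => by
        rw [show (∑ j, t (b, j) * Real.log (p b)) = (∑ j, t (b, j)) * Real.log (p b) from
          (Finset.sum_mul _ _ _).symm]]
      rw [Finset.sum_congr rfl fun b (_ : b ∈ Finset.univ) => by rw [hlogp b]]
      have h3 : ∑ b, (∑ j, t (b, j)) * (-β * E b - Real.log Z)
          = -β * (∑ b, (∑ j, t (b, j)) * E b) - Real.log Z * ∑ b, ∑ j, t (b, j) := by
        rw [Finset.mul_sum, Finset.mul_sum, ← Finset.sum_sub_distrib]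
        apply Finset.sum_congr rfl; intro b _
        ring
      rw [h3]
      rw [show (∑ b, ∑ j, t (b, j)) = 1 from by rw [← Fintype.sum_prod_type]; exact htsum]
      rw [show (∑ b, (∑ j, t (b, j)) * E b) = F from by
        rw [hFdef, Fintype.sum_prod_type]
        apply Finset.sum_congr rfl; intro b _
        rw [Finset.sum_mul]
        exact Finset.sum_congr rfl fun j _ => by ring]
      ring
    have h4 : ∑ k : Fin m × Fin d, t k * Real.log (μ k.2) = M := by
      rw [Fintype.sum_prod_type, Finset.sum_comm, hMdef]
      apply Finset.sum_congr rfl; intro j _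
      calc ∑ b, t (b, j) * Real.log (μ (b, j).2)
          = (∑ b, t (b, j)) * Real.log (μ j) := by rw [Finset.sum_mul]
        _ = μ j * Real.log (μ j) := by rw [hμt j]
    rw [h2, h4]
  have hR : ∑ a, p a * Real.log (p a) = -β * IE - Real.log Z := by
    rw [Finset.sum_congr rfl fun a (_ : a ∈ Finset.univ) => by rw [hlogp a]]
    rw [show (∑ a, p a * (-β * E a - Real.log Z))
        = -β * (∑ a, p a * E a) - Real.log Z * ∑ a, p a from by
      rw [Finset.mul_sum, Finset.mul_sum, ← Finset.sum_sub_distrib]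
      apply Finset.sum_congr rfl; intro a _
      ring]
    rw [hpsum, hIEdef]
    ring
  rw [hL, hR] at key
  -- goal rewriting
  have hgoal1 : (Matrix.trace (H' * ρf)).re = F := by rw [hFtr]; exact Complex.ofReal_re _
  have hgoal2 : (Matrix.trace (H' * ρi)).re = IE := by rw [hIEtr]; exact Complex.ofReal_re _
  rw [ge_iff_le, hgoal1, hgoal2, hvNeq]
  -- key : -β * F - Real.log Z + M ≤ -β * IE - Real.log Z
  have h5 : β * IE + M ≤ β * F := by linarith
  have h6 : IE + β⁻¹ * M ≤ F := by
    have h7 := mul_le_mul_of_nonneg_left h5 (inv_pos.mpr hβ).le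
    rw [mul_add, ← mul_assoc, inv_mul_cancel₀ hβ.ne', one_mul, ← mul_assoc,
      inv_mul_cancel₀ hβ.ne', one_mul] at h7
    exact h7
  linarith
end

section
/- Let H be self-adjoint on a finite-dimensional space with non-decreasing eigenvalues E_1 ≤ … ≤ E_n and eigenbasis {ψ_i}, and let Φ be a linear, positivity-preserving, trace-preserving, unital map on n×n matrices. If ρ = ∑_i p_i |ψ_i⟩⟨ψ_i| with p_1 ≥ p_2 ≥ … ≥ p_n ≥ 0, ∑_i p_i = 1, then Tr[H Φ(ρ)] ≥ Tr[H ρ]. -/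
open Matrix BigOperators Finset
open scoped ComplexOrder

private lemma Bk (n k : ℕ) (hk : k + 1 < n) (D : ℕ → ℕ → ℝ) (p : ℕ → ℝ)
    (hD0 : ∀ i j, i < n → j < n → 0 ≤ D i j)
    (hrow : ∀ i, i < n → ∑ j ∈ Finset.range n, D i j = 1)
    (hcol : ∀ j, j < n → ∑ i ∈ Finset.range n, D i j = 1)
    (hp : ∀ i j, i ≤ j → j < n → p j ≤ p i) :
    0 ≤ ∑ i ∈ Finset.range n, ∑ j ∈ Finset.range n,
        D i j * p j * ((if k < i then (1:ℝ) else 0) - (if k < j then 1 else 0)) := by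
  set χ : ℕ → ℝ := fun j => if k < j then 1 else 0 with hχ
  set g : ℕ → ℝ := fun j => ∑ i ∈ Finset.range n, D i j * χ i with hg
  have hBk : ∑ i ∈ Finset.range n, ∑ j ∈ Finset.range n,
      D i j * p j * (χ i - χ j)
      = ∑ j ∈ Finset.range n, (p j * g j - p j * χ j) := by
    rw [Finset.sum_comm]
    refine Finset.sum_congr rfl fun j hj => ?_
    have : ∑ i ∈ Finset.range n, D i j * p j * (χ i - χ j)
        = p j * g j - (p j * χ j) * ∑ i ∈ Finset.range n, D i j := by
      rw [hg, Finset.mul_sum, Finset.mul_sum, ← Finset.sum_sub_distrib]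
      exact Finset.sum_congr rfl fun i _ => by ring
    rw [this, hcol j (Finset.mem_range.mp hj), mul_one]
  have hgs : ∑ j ∈ Finset.range n, g j = ∑ j ∈ Finset.range n, χ j := by
    simp_rw [hg]
    rw [Finset.sum_comm]
    refine Finset.sum_congr rfl fun i hi => ?_
    rw [← Finset.sum_mul, hrow i (Finset.mem_range.mp hi), one_mul]
  have hid : ∑ j ∈ Finset.range n, (p j * g j - p j * χ j)
      = ∑ j ∈ Finset.range n, (p j - p (k+1)) * (g j - χ j)
        + p (k+1) * (∑ j ∈ Finset.range n, g j - ∑ j ∈ Finset.range n, χ j) := by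
    rw [← Finset.sum_sub_distrib, Finset.mul_sum, ← Finset.sum_add_distrib]
    exact Finset.sum_congr rfl fun j _ => by ring
  rw [hBk, hid, hgs, sub_self, mul_zero, add_zero]
  refine Finset.sum_nonneg fun j hj => ?_
  have hj' := Finset.mem_range.mp hj
  by_cases h : k < j
  · have h1 : p j - p (k+1) ≤ 0 := sub_nonpos.mpr (hp (k+1) j h hj')
    have h2 : g j - χ j ≤ 0 := by
      have : g j ≤ 1 := by
        rw [← hcol j hj', hg]
        refine Finset.sum_le_sum fun i hi => ?_
        have := hD0 i j (Finset.mem_range.mp hi) hj'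
        simp only [hχ]; split <;> simp [this]
      simp only [hχ, if_pos h]; linarith
    nlinarith
  · have h1 : 0 ≤ p j - p (k+1) := sub_nonneg.mpr (hp j (k+1) (by omega) hk)
    have h2 : 0 ≤ g j - χ j := by
      simp only [hχ, if_neg h, sub_zero, hg]
      refine Finset.sum_nonneg fun i hi => ?_
      have := hD0 i j (Finset.mem_range.mp hi) hj'
      split <;> simp [this]
    exact mul_nonneg h1 h2


private lemma tele_aux (E : ℕ → ℝ) {n i : ℕ} (hi : i < n) :
    ∑ k ∈ Finset.range (n-1), (E (k+1) - E k) * (if k < i then 1 else 0) = E i - E 0 := by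
  have h : ∀ k ∈ Finset.range (n-1), (E (k+1) - E k) * (if k < i then 1 else 0)
      = if k < i then (E (k+1) - E k) else 0 := by
    intro k _; split <;> simp
  rw [Finset.sum_congr rfl h, ← Finset.sum_filter]
  have : (Finset.range (n-1)).filter (· < i) = Finset.range i := by
    ext k; simp; omega
  rw [this, Finset.sum_range_sub]

/-- Lenard's rearrangement lemma over ℕ indices. -/
private lemma lenard (n : ℕ) (D : ℕ → ℕ → ℝ) (E p : ℕ → ℝ)
    (hD0 : ∀ i j, i < n → j < n → 0 ≤ D i j)
    (hrow : ∀ i, i < n → ∑ j ∈ Finset.range n, D i j = 1)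
    (hcol : ∀ j, j < n → ∑ i ∈ Finset.range n, D i j = 1)
    (hE : ∀ i j, i ≤ j → j < n → E i ≤ E j)
    (hp : ∀ i j, i ≤ j → j < n → p j ≤ p i) :
    ∑ i ∈ Finset.range n, E i * p i ≤
      ∑ i ∈ Finset.range n, ∑ j ∈ Finset.range n, D i j * E i * p j := by
  -- rewrite LHS using column sums
  have hL : ∑ i ∈ Finset.range n, E i * p i
      = ∑ i ∈ Finset.range n, ∑ j ∈ Finset.range n, D i j * E j * p j := by
    rw [Finset.sum_comm]
    refine (Finset.sum_congr rfl fun j hj => ?_).symm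
    rw [← Finset.sum_mul, ← Finset.sum_mul]
    rw [hcol j (Finset.mem_range.mp hj), one_mul]
  rw [hL, ← sub_nonneg, ← Finset.sum_sub_distrib]
  simp_rw [← Finset.sum_sub_distrib]
  have key : ∀ i ∈ Finset.range n, ∀ j ∈ Finset.range n,
      D i j * E i * p j - D i j * E j * p j
        = ∑ k ∈ Finset.range (n-1), (E (k+1) - E k) *
            (D i j * p j * ((if k < i then 1 else 0) - (if k < j then 1 else 0))) := by
    intro i hi j hj
    have hi' := Finset.mem_range.mp hi
    have hj' := Finset.mem_range.mp hj
    have : E i - E j = ∑ k ∈ Finset.range (n-1), (E (k+1) - E k) *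
        ((if k < i then 1 else 0) - (if k < j then 1 else 0)) := by
      simp_rw [mul_sub, Finset.sum_sub_distrib, tele_aux E hi', tele_aux E hj']
      ring
    calc D i j * E i * p j - D i j * E j * p j = (E i - E j) * (D i j * p j) := by ring
      _ = _ := by rw [this, Finset.sum_mul]; exact Finset.sum_congr rfl fun k _ => by ring
  rw [Finset.sum_congr rfl (fun i hi => Finset.sum_congr rfl (fun j hj => key i hi j hj))]
  have reorder : ∑ i ∈ Finset.range n, ∑ j ∈ Finset.range n,
      ∑ k ∈ Finset.range (n-1), (E (k+1) - E k) *
        (D i j * p j * ((if k < i then (1:ℝ) else 0) - (if k < j then 1 else 0)))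
      = ∑ k ∈ Finset.range (n-1), (E (k+1) - E k) *
          ∑ i ∈ Finset.range n, ∑ j ∈ Finset.range n,
            D i j * p j * ((if k < i then (1:ℝ) else 0) - (if k < j then 1 else 0)) := by
    rw [Finset.sum_congr rfl fun i _ => Finset.sum_comm, Finset.sum_comm]
    refine Finset.sum_congr rfl fun k _ => ?_
    rw [Finset.mul_sum]
    refine Finset.sum_congr rfl fun i _ => ?_
    rw [Finset.mul_sum]
  rw [reorder]
  refine Finset.sum_nonneg fun k hk => ?_
  have hk' : k + 1 < n := by have := Finset.mem_range.mp hk; omega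
  refine mul_nonneg (sub_nonneg.mpr (hE k (k+1) (by omega) hk')) ?_
  exact Bk n k hk' D p hD0 hrow hcol hp


section
variable {n : ℕ}

private noncomputable def eM (j : Fin n) : Matrix (Fin n) (Fin n) ℂ :=
  Matrix.diagonal (fun k => if k = j then 1 else 0)

private lemma eM_sum : ∑ j, eM (n := n) j = 1 := by
  ext i k
  simp only [Matrix.sum_apply, eM, Matrix.diagonal_apply, Matrix.one_apply]
  by_cases h : i = k <;> simp [h, Finset.sum_ite_eq]

private lemma eM_psd (j : Fin n) : (eM (n := n) j).PosSemidef := by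
  refine Matrix.posSemidef_diagonal_iff.mpr fun i => ?_
  split <;> simp

private lemma diag_decomp (p : Fin n → ℝ) :
    Matrix.diagonal (fun i => (p i : ℂ)) = ∑ j, (p j : ℂ) • eM j := by
  ext i k
  simp only [Matrix.sum_apply, Matrix.smul_apply, eM, Matrix.diagonal_apply]
  by_cases h : i = k <;> simp [h, Finset.sum_ite_eq, mul_ite]

private lemma trace_diag_mul (v : Fin n → ℝ) (M : Matrix (Fin n) (Fin n) ℂ) :
    (Matrix.trace (Matrix.diagonal (fun i => (v i : ℂ)) * M)).re
      = ∑ i, v i * (M i i).re := by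
  rw [Matrix.trace, Complex.re_sum]
  refine Finset.sum_congr rfl fun i _ => ?_
  simp [Matrix.diag, Matrix.diagonal_mul, Complex.mul_re]

private lemma psd_diag_re_nonneg {A : Matrix (Fin n) (Fin n) ℂ} (hA : A.PosSemidef)
    (i : Fin n) : 0 ≤ (A i i).re := by
  have h : (0:ℂ) ≤ A i i := by
    exact hA.diag_nonneg
  simpa using (Complex.le_def.mp h).1

end

/-- Second law for unital dynamics: if `H = W diag(E) Wᴴ` with non-decreasing
eigenvalues and `ρ = W diag(p) Wᴴ` with non-increasing occupation probabilities, then a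
linear, positivity-preserving, trace-preserving, unital map cannot decrease the energy
expectation. -/
theorem stmt18 {n : ℕ} (E p : Fin n → ℝ)
    (hE : Monotone E) (hp : Antitone p)
    (hp0 : ∀ i, 0 ≤ p i) (hp1 : ∑ i, p i = 1)
    (W : Matrix (Fin n) (Fin n) ℂ) (hW : W ∈ Matrix.unitaryGroup (Fin n) ℂ)
    (Φ : Matrix (Fin n) (Fin n) ℂ →ₗ[ℂ] Matrix (Fin n) (Fin n) ℂ)
    (hpos : ∀ X : Matrix (Fin n) (Fin n) ℂ, X.PosSemidef → (Φ X).PosSemidef)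
    (htr : ∀ X : Matrix (Fin n) (Fin n) ℂ, (Φ X).trace = X.trace)
    (hunital : Φ 1 = 1) :
    (Matrix.trace ((W * Matrix.diagonal (fun i => (E i : ℂ)) * Wᴴ) *
        (W * Matrix.diagonal (fun i => (p i : ℂ)) * Wᴴ))).re ≤
      (Matrix.trace ((W * Matrix.diagonal (fun i => (E i : ℂ)) * Wᴴ) *
        Φ (W * Matrix.diagonal (fun i => (p i : ℂ)) * Wᴴ))).re := by
  classical
  set dE := Matrix.diagonal (fun i => (E i : ℂ)) with hdE
  set dp := Matrix.diagonal (fun i => (p i : ℂ)) with hdp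
  have hW1 : Wᴴ * W = 1 := by
    simpa [Matrix.star_eq_conjTranspose] using hW.1
  have hW2 : W * Wᴴ = 1 := by
    simpa [Matrix.star_eq_conjTranspose] using hW.2
  -- generic trace formula
  have trf : ∀ σ : Matrix (Fin n) (Fin n) ℂ,
      (Matrix.trace ((W * dE * Wᴴ) * σ)).re = ∑ i, E i * ((Wᴴ * σ * W) i i).re := by
    intro σ
    have h1 : (W * dE * Wᴴ) * σ = W * (dE * (Wᴴ * σ)) := by
      rw [Matrix.mul_assoc, Matrix.mul_assoc]
    rw [h1, Matrix.trace_mul_comm]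
    have h2 : dE * (Wᴴ * σ) * W = dE * (Wᴴ * σ * W) := by
      simp only [Matrix.mul_assoc]
    rw [h2, hdE, trace_diag_mul]
  -- sandwiching
  have sandwich : ∀ A : Matrix (Fin n) (Fin n) ℂ, Wᴴ * (W * A * Wᴴ) * W = A := by
    intro A
    calc Wᴴ * (W * A * Wᴴ) * W = (Wᴴ * W) * A * (Wᴴ * W) := by
          simp only [Matrix.mul_assoc]
      _ = A := by rw [hW1, one_mul, mul_one]
  -- LHS
  have lhs_eq : (Matrix.trace ((W * dE * Wᴴ) * (W * dp * Wᴴ))).re = ∑ i, E i * p i := by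
    rw [trf, ]
    refine Finset.sum_congr rfl fun i _ => ?_
    rw [sandwich]
    simp [hdp, Matrix.diagonal_apply]
  -- doubly stochastic matrix
  set D : Fin n → Fin n → ℝ :=
    fun i j => ((Wᴴ * Φ (W * eM j * Wᴴ) * W) i i).re with hD
  have hD0 : ∀ i j, 0 ≤ D i j := by
    intro i j
    have h1 : (W * eM j * Wᴴ).PosSemidef := (eM_psd j).mul_mul_conjTranspose_same W
    have h2 := hpos _ h1
    have h3 : (Wᴴ * Φ (W * eM j * Wᴴ) * W).PosSemidef := h2.conjTranspose_mul_mul_same W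
    exact psd_diag_re_nonneg h3 i
  have hrow : ∀ i, ∑ j, D i j = 1 := by
    intro i
    have e1 : ∑ j, W * eM j * Wᴴ = 1 := by
      rw [← Matrix.sum_mul, ← Matrix.mul_sum, eM_sum, mul_one, hW2]
    have e2 : ∑ j, Wᴴ * Φ (W * eM j * Wᴴ) * W = 1 := by
      calc ∑ j, Wᴴ * Φ (W * eM j * Wᴴ) * W
          = Wᴴ * Φ (∑ j, W * eM j * Wᴴ) * W := by
            rw [map_sum, Matrix.mul_sum, Matrix.sum_mul]
        _ = 1 := by rw [e1, hunital, mul_one, hW1]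
    calc ∑ j, D i j = ((∑ j, Wᴴ * Φ (W * eM j * Wᴴ) * W) i i).re := by
          rw [Matrix.sum_apply, Complex.re_sum]
      _ = 1 := by rw [e2]; simp [Matrix.one_apply]
  have hcol : ∀ j, ∑ i, D i j = 1 := by
    intro j
    have t1 : Matrix.trace (Wᴴ * Φ (W * eM j * Wᴴ) * W) = 1 := by
      rw [Matrix.trace_mul_cycle, hW2, one_mul, htr, Matrix.trace_mul_cycle, hW1, one_mul]
      simp [eM, Matrix.trace_diagonal, Finset.sum_ite_eq]
    calc ∑ i, D i j = (Matrix.trace (Wᴴ * Φ (W * eM j * Wᴴ) * W)).re := by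
          rw [Matrix.trace, Complex.re_sum]; rfl
      _ = 1 := by rw [t1]; simp
  -- q relation
  have hq : ∀ i, ((Wᴴ * Φ (W * dp * Wᴴ) * W) i i).re = ∑ j, p j * D i j := by
    intro i
    have hdec : Wᴴ * Φ (W * dp * Wᴴ) * W
        = ∑ j, (p j : ℂ) • (Wᴴ * Φ (W * eM j * Wᴴ) * W) := by
      rw [hdp, diag_decomp]
      rw [Matrix.mul_sum, Matrix.sum_mul, map_sum, Matrix.mul_sum, Matrix.sum_mul]
      refine Finset.sum_congr rfl fun j _ => ?_
      rw [Matrix.mul_smul, Matrix.smul_mul, _root_.map_smul, Matrix.mul_smul, Matrix.smul_mul]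
    rw [hdec, Matrix.sum_apply, Complex.re_sum]
    refine Finset.sum_congr rfl fun j _ => ?_
    simp [Matrix.smul_apply, Complex.mul_re, hD]
  -- RHS
  have rhs_eq : (Matrix.trace ((W * dE * Wᴴ) * Φ (W * dp * Wᴴ))).re
      = ∑ i, E i * ∑ j, p j * D i j := by
    rw [trf]
    exact Finset.sum_congr rfl fun i _ => by rw [hq]
  rw [lhs_eq, rhs_eq]
  -- bridge to ℕ-indexed Lenard lemma
  set EN : ℕ → ℝ := fun m => if h : m < n then E ⟨m, h⟩ else 0 with hEN
  set pN : ℕ → ℝ := fun m => if h : m < n then p ⟨m, h⟩ else 0 with hpN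
  set DN : ℕ → ℕ → ℝ := fun a b =>
    if h : a < n then if h' : b < n then D ⟨a, h⟩ ⟨b, h'⟩ else 0 else 0 with hDN
  have hbl : ∑ i, E i * p i = ∑ i ∈ Finset.range n, EN i * pN i := by
    rw [Finset.sum_range]
    exact (Finset.sum_congr rfl fun i _ => by simp [hEN, hpN, i.isLt]).symm
  have hbr : ∑ i, E i * ∑ j, p j * D i j
      = ∑ i ∈ Finset.range n, ∑ j ∈ Finset.range n, DN i j * EN i * pN j := by
    rw [Finset.sum_range]
    refine (Finset.sum_congr rfl fun i _ => ?_).symm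
    rw [Finset.sum_range, Finset.mul_sum]
    refine Finset.sum_congr rfl fun j _ => ?_
    simp only [hEN, hpN, hDN, i.isLt, j.isLt, dif_pos, Fin.eta]
    ring
  rw [hbl, hbr]
  refine lenard n DN EN pN ?_ ?_ ?_ ?_ ?_
  · intro a b ha hb
    simp [hDN, ha, hb, hD0]
  · intro a ha
    rw [Finset.sum_range]
    calc ∑ j : Fin n, DN a ↑j = ∑ j : Fin n, D ⟨a, ha⟩ j :=
          Finset.sum_congr rfl fun j _ => by simp [hDN, ha, j.isLt]
      _ = 1 := hrow _
  · intro b hb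
    rw [Finset.sum_range]
    calc ∑ i : Fin n, DN ↑i b = ∑ i : Fin n, D i ⟨b, hb⟩ :=
          Finset.sum_congr rfl fun i _ => by simp [hDN, hb, i.isLt]
      _ = 1 := hcol _
  · intro i j hij hj
    have hi : i < n := lt_of_le_of_lt hij hj
    simp only [hEN, dif_pos hi, dif_pos hj]
    exact hE (Fin.mk_le_mk.mpr hij)
  · intro i j hij hj
    have hi : i < n := lt_of_le_of_lt hij hj
    simp only [hpN, dif_pos hi, dif_pos hj]
    exact hp (Fin.mk_le_mk.mpr hij)
end
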